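/- arXiv:2503.14398 — 2 statements merged into one kernel-verified Lean document; each statement's English description precedes it below -/
import Mathlib

section
/- Let u: ℝ^n → [0,∞) be log-Hölder continuous at infinity with constant C_∞ and 0 < u_∞ < ∞, and for t > 0 set R_t(x) = (e+|x|)^{−nt}. Then for any measurable set E of finite measure and any measurable F with 0 ≤ F(y) ≤ 1 on E: ∫_E F(y)^{u(y)} dy ≤ e^{ntC_∞} ∫_E F(y)^{u_∞} dy + ∫_E R_t(y)^{u_−} dy, and symmetrically ∫_E F(y)^{u_∞} dy ≤ e^{ntC_∞} ∫_E F(y)^{u(y)} dy + ∫_E R_t(y)^{u_−} dy. -/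
/-!
Split `E` according to the size of `F` against the weight `R = (e + |y|) ^ (-nt)`. Where
`F ≤ R`, `F ^ p ≤ R ^ u₋` as soon as `u₋ ≤ p`. Where `F > R`, the log-Hölder bound
`|u - u∞| ≤ C∞ / log (e + |y|) =: d` gives `F ^ (p - q) ≤ F ^ (-d) ≤ R ^ (-d) = e ^ (ntC∞)` with
`{p, q} = {u, u∞}`. The reverse inequality needs `u₋ ≤ u∞`, which holds because `u → u∞` at
infinity.
-/

open MeasureTheory ENNReal

noncomputable section

abbrev Euc (n : ℕ) := EuclideanSpace ℝ (Fin n)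

/-- Local log-Hölder continuity with constant `C0`. -/
def LocLH {n : ℕ} (r : Euc n → ℝ) (C0 : ℝ) : Prop :=
  ∀ x y : Euc n, dist x y < 1 / 2 → |r x - r y| ≤ C0 / (-Real.log (dist x y))

/-- Log-Hölder continuity at infinity with constant `Ci` and limit value `rinf`. -/
def InfLH {n : ℕ} (r : Euc n → ℝ) (Ci rinf : ℝ) : Prop :=
  ∀ x : Euc n, |r x - rinf| ≤ Ci / Real.log (Real.exp 1 + ‖x‖)

open Filter Topology Bornology Real

namespace Real

lemma rpow_le_rpow_of_le_of_exponent_ge {a R p m : ℝ} (ha0 : 0 ≤ a) (ha1 : a ≤ 1) (haR : a ≤ R)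
    (hm : 0 ≤ m) (hmp : m ≤ p) : a ^ p ≤ R ^ m :=
  (rpow_le_rpow_of_exponent_ge' ha0 ha1 hm hmp).trans (rpow_le_rpow ha0 haR hm)

lemma rpow_le_rpow_neg_mul_rpow {a R p q d : ℝ} (hR : 0 < R) (hRa : R ≤ a) (ha1 : a ≤ 1)
    (hpq : |p - q| ≤ d) : a ^ p ≤ R ^ (-d) * a ^ q := by
  have ha : 0 < a := hR.trans_le hRa
  calc a ^ p = a ^ (p - q) * a ^ q := by rw [← rpow_add ha, sub_add_cancel]
    _ ≤ a ^ (-d) * a ^ q := mul_le_mul_of_nonneg_right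
      (rpow_le_rpow_of_exponent_ge ha ha1 (neg_le_of_abs_le hpq)) (rpow_nonneg ha.le q)
    _ ≤ R ^ (-d) * a ^ q := mul_le_mul_of_nonneg_right
      (rpow_le_rpow_of_nonpos hR hRa (neg_nonpos.2 ((abs_nonneg _).trans hpq)))
      (rpow_nonneg ha.le q)

lemma rpow_le_rpow_neg_mul_rpow_add_rpow {a R p q d m : ℝ} (ha0 : 0 ≤ a) (ha1 : a ≤ 1)
    (hR : 0 < R) (hm : 0 ≤ m) (hmp : m ≤ p) (hpq : |p - q| ≤ d) :
    a ^ p ≤ R ^ (-d) * a ^ q + R ^ m := by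
  rcases le_or_gt a R with haR | hRa
  · have : 0 ≤ R ^ (-d) * a ^ q := by positivity
    linarith [rpow_le_rpow_of_le_of_exponent_ge ha0 ha1 haR hm hmp]
  · exact (rpow_le_rpow_neg_mul_rpow hR hRa.le ha1 hpq).trans
      (le_add_of_nonneg_right (by positivity))

lemma rpow_neg_rpow_neg_div_log {b : ℝ} (hb0 : 0 < b) (hb1 : b ≠ 1) (s c : ℝ) :
    (b ^ (-s)) ^ (-(c / log b)) = exp (s * c) := by
  have : log b ≠ 0 := log_ne_zero_of_pos_of_ne_one hb0 hb1
  rw [← rpow_mul hb0.le, rpow_def_of_pos hb0]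
  field_simp

end Real

lemma setLIntegral_ofReal_le_mul_add {α : Type*} [MeasurableSpace α] {μ : Measure α}
    {E : Set α} {f g h : α → ℝ} {K : ℝ} (hE : MeasurableSet E) (hh : Measurable h) (hK : 0 ≤ K)
    (hfgh : ∀ y ∈ E, f y ≤ K * g y + h y) :
    ∫⁻ y in E, ENNReal.ofReal (f y) ∂μ ≤
      ENNReal.ofReal K * (∫⁻ y in E, ENNReal.ofReal (g y) ∂μ) +
        ∫⁻ y in E, ENNReal.ofReal (h y) ∂μ :=
  calc ∫⁻ y in E, ENNReal.ofReal (f y) ∂μ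
      ≤ ∫⁻ y in E, ENNReal.ofReal K * ENNReal.ofReal (g y) + ENNReal.ofReal (h y) ∂μ :=
        setLIntegral_mono' hE fun y hy => by
          rw [← ENNReal.ofReal_mul hK]
          exact (ENNReal.ofReal_le_ofReal (hfgh y hy)).trans ENNReal.ofReal_add_le
    _ = _ := by
      rw [lintegral_add_right' _ hh.ennreal_ofReal.aemeasurable,
        lintegral_const_mul' _ _ ENNReal.ofReal_ne_top]

namespace InfLH

variable {n : ℕ} {u : Euc n → ℝ} {Ci uinf : ℝ}

lemma tendsto_cobounded (hu : InfLH u Ci uinf) : Tendsto u (cobounded (Euc n)) (𝓝 uinf) := by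
  have hlog : Tendsto (fun x : Euc n => log (exp 1 + ‖x‖)) (cobounded (Euc n)) atTop :=
    tendsto_log_atTop.comp (tendsto_atTop_add_const_left _ _ tendsto_norm_cobounded_atTop)
  exact tendsto_iff_norm_sub_tendsto_zero.2 <|
    squeeze_zero (fun _ => norm_nonneg _) hu (tendsto_const_nhds.div_atTop hlog)

lemma le_of_forall_le (hu : InfLH u Ci uinf) (hn : 0 < n) {um : ℝ} (hum : ∀ x, um ≤ u x) :
    um ≤ uinf :=
  have : Nonempty (Fin n) := ⟨⟨0, hn⟩⟩
  ge_of_tendsto' hu.tendsto_cobounded hum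

end InfLH

lemma setLIntegral_rpow_le_exp_mul_add {n : ℕ} {p q : Euc n → ℝ} {c um : ℝ} (s : ℝ)
    (hum0 : 0 ≤ um) (hump : ∀ y, um ≤ p y)
    (hpq : ∀ y : Euc n, |p y - q y| ≤ c / log (exp 1 + ‖y‖))
    {E : Set (Euc n)} (hE : MeasurableSet E) {F : Euc n → ℝ} (hF01 : ∀ y ∈ E, 0 ≤ F y ∧ F y ≤ 1) :
    ∫⁻ y in E, ENNReal.ofReal (F y ^ p y) ≤
      ENNReal.ofReal (exp (s * c)) * (∫⁻ y in E, ENNReal.ofReal (F y ^ q y)) +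
        ∫⁻ y in E, ENNReal.ofReal (((exp 1 + ‖y‖) ^ (-s)) ^ um) :=
  setLIntegral_ofReal_le_mul_add hE (h := fun y => ((exp 1 + ‖y‖) ^ (-s)) ^ um) (by fun_prop)
    (exp_nonneg _) fun y hy => by
    have hb : 1 < exp 1 + ‖y‖ := by linarith [one_lt_exp_iff.2 one_pos, norm_nonneg y]
    rw [← rpow_neg_rpow_neg_div_log (by linarith) hb.ne']
    exact rpow_le_rpow_neg_mul_rpow_add_rpow (hF01 y hy).1 (hF01 y hy).2 (by positivity) hum0
      (hump y) (hpq y)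

theorem stmt4_general {n : ℕ} (u : Euc n → ℝ) (Ci uinf um t : ℝ)
    (hu0 : ∀ x, 0 ≤ u x) (hum : ∀ x, um ≤ u x) (hum0 : 0 ≤ um)
    (hui : InfLH u Ci uinf) (huinf : 0 < uinf)
    (E : Set (Euc n)) (hE : MeasurableSet E)
    (F : Euc n → ℝ)
    (hF01 : ∀ y ∈ E, 0 ≤ F y ∧ F y ≤ 1) :
    (∫⁻ y in E, ENNReal.ofReal (F y ^ u y)) ≤
        ENNReal.ofReal (Real.exp ((n : ℝ) * t * Ci)) * (∫⁻ y in E, ENNReal.ofReal (F y ^ uinf)) +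
          ∫⁻ y in E, ENNReal.ofReal (((Real.exp 1 + ‖y‖) ^ (-((n : ℝ) * t))) ^ um) ∧
      (∫⁻ y in E, ENNReal.ofReal (F y ^ uinf)) ≤
        ENNReal.ofReal (Real.exp ((n : ℝ) * t * Ci)) * (∫⁻ y in E, ENNReal.ofReal (F y ^ u y)) +
          ∫⁻ y in E, ENNReal.ofReal (((Real.exp 1 + ‖y‖) ^ (-((n : ℝ) * t))) ^ um) := by
  rcases Nat.eq_zero_or_pos n with rfl | hn
  · -- On `ℝ⁰` the weight is `1`, and `F ^ p ≤ 1` for `p ≥ 0` suffices.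
    have hpt : ∀ {p q : Euc 0 → ℝ}, (∀ y, 0 ≤ p y) → ∀ y ∈ E, F y ^ p y ≤
        exp (((0 : ℕ) : ℝ) * t * Ci) * F y ^ q y +
          ((exp 1 + ‖y‖) ^ (-(((0 : ℕ) : ℝ) * t))) ^ um := by
      intro p q hp y hy
      simp only [CharP.cast_eq_zero, zero_mul, exp_zero, one_mul, neg_zero, Real.rpow_zero,
        Real.one_rpow]
      linarith [rpow_le_one (hF01 y hy).1 (hF01 y hy).2 (hp y), rpow_nonneg (hF01 y hy).1 (q y)]
    have hR : Measurable fun y : Euc 0 => ((exp 1 + ‖y‖) ^ (-(((0 : ℕ) : ℝ) * t))) ^ um := by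
      fun_prop
    exact ⟨setLIntegral_ofReal_le_mul_add hE hR (exp_nonneg _) (hpt hu0),
      setLIntegral_ofReal_le_mul_add hE hR (exp_nonneg _) (hpt fun _ => huinf.le)⟩
  · have huminf : um ≤ uinf := hui.le_of_forall_le hn hum
    exact ⟨setLIntegral_rpow_le_exp_mul_add _ hum0 hum hui hE hF01,
      setLIntegral_rpow_le_exp_mul_add _ hum0 (fun _ => huminf)
        (fun y => abs_sub_comm uinf (u y) ▸ hui y) hE hF01⟩

/-- Let `u : ℝⁿ → [0,∞)` be log-Hölder continuous at infinity with
constant `Ci` and limit `0 < uinf`, let `um` be a (nonnegative) lower bound for `u`, and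
for `t > 0` set `R_t(x) = (e + |x|)^{-nt}`. Then for any measurable set `E` of finite
measure and any measurable `F` with `0 ≤ F ≤ 1` on `E`:
`∫_E F^{u(y)} ≤ e^{ntCi} ∫_E F^{uinf} + ∫_E R_t^{um}` and symmetrically
`∫_E F^{uinf} ≤ e^{ntCi} ∫_E F^{u(y)} + ∫_E R_t^{um}`. -/
theorem stmt4 {n : ℕ} (u : Euc n → ℝ) (Ci uinf um t : ℝ)
    (hu0 : ∀ x, 0 ≤ u x) (hum : ∀ x, um ≤ u x) (hum0 : 0 ≤ um)
    (hui : InfLH u Ci uinf) (huinf : 0 < uinf) (ht : 0 < t)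
    (hu : Measurable u)
    (E : Set (Euc n)) (hE : MeasurableSet E) (hEfin : volume E < ∞)
    (F : Euc n → ℝ) (hF : Measurable F)
    (hF01 : ∀ y ∈ E, 0 ≤ F y ∧ F y ≤ 1) :
    (∫⁻ y in E, ENNReal.ofReal (F y ^ u y)) ≤
        ENNReal.ofReal (Real.exp ((n : ℝ) * t * Ci)) * (∫⁻ y in E, ENNReal.ofReal (F y ^ uinf)) +
          ∫⁻ y in E, ENNReal.ofReal (((Real.exp 1 + ‖y‖) ^ (-((n : ℝ) * t))) ^ um) ∧
      (∫⁻ y in E, ENNReal.ofReal (F y ^ uinf)) ≤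
        ENNReal.ofReal (Real.exp ((n : ℝ) * t * Ci)) * (∫⁻ y in E, ENNReal.ofReal (F y ^ u y)) +
          ∫⁻ y in E, ENNReal.ofReal (((Real.exp 1 + ‖y‖) ^ (-((n : ℝ) * t))) ^ um) :=
  stmt4_general u Ci uinf um t hu0 hum hum0 hui huinf E hE F hF01
end
end

section
/- Hölder's inequality in variable Lebesgue spaces: given an exponent function p(·), for all f ∈ L^{p(·)}(ℝ^n) and g ∈ L^{p'(·)}(ℝ^n), the product fg is integrable and ∫ |fg| dx ≤ 4 ‖f‖_{L^{p(·)}} ‖g‖_{L^{p'(·)}}; moreover if 1 < p_− ≤ p_+ < ∞ the constant 4 can be replaced by 2. -/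
open MeasureTheory ENNReal

noncomputable section

/-- The modular of a variable Lebesgue space with (extended-real valued) exponent `p`:
the integral of `f ^ p` over the set where `p` is finite plus the essential supremum
of `f` over the set where `p = ∞`. -/
def modularE {n : ℕ} (p : Euc n → ℝ≥0∞) (f : Euc n → ℝ≥0∞) : ℝ≥0∞ :=
  (∫⁻ x in {x | p x ≠ ∞}, f x ^ (p x).toReal) +
    essSup f (volume.restrict {x | p x = ∞})

/-- The Luxemburg norm of the variable Lebesgue space `L^{p(·)}(ℝⁿ)`. -/
def luxNormE {n : ℕ} (p : Euc n → ℝ≥0∞) (f : Euc n → ℝ≥0∞) : ℝ≥0∞ :=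
  sInf {l : ℝ≥0∞ | l ≠ 0 ∧ modularE p (fun x => f x / l) ≤ 1}

/-!
Pointwise, `u v ≤ u ^ p · 1_{p < ∞} + v ^ q · 1_{q < ∞}` almost everywhere as soon as the
modulars of `u` and `v` are at most one: where both exponents are finite this is Young's
inequality, and where `p = ∞` (so `q = 1`) it follows from `u ≤ 1` a.e. there, symmetrically
where `q = ∞`. Integrating gives `∫ u v ≤ 2`, and applying this to `u / λ`, `v / μ` with `λ, μ`
just above the Luxemburg norms gives the constant `2` for every exponent.
-/

namespace ENNReal.HolderConjugate

lemma mul_le_rpow_add_rpow {a b : ℝ≥0∞} [a.HolderConjugate b] {s t : ℝ≥0∞}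
    (hs : a = ∞ → s ≤ 1) (ht : b = ∞ → t ≤ 1) :
    s * t ≤ (if a ≠ ∞ then s ^ a.toReal else 0) + (if b ≠ ∞ then t ^ b.toReal else 0) := by
  by_cases ha : a = ∞
  · have hb1 : b = 1 := (eq_top_iff_eq_one a b).1 ha
    simpa [ha, hb1] using mul_le_of_le_one_left' (hs ha)
  by_cases hb : b = ∞
  · have ha1 : a = 1 := (eq_top_iff_eq_one b a).1 hb
    simpa [ha1, hb] using mul_le_of_le_one_right' (ht hb)
  have hab : a.toReal.HolderConjugate b.toReal := toReal_of_ne_top ha hb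
  calc s * t ≤ s ^ a.toReal / ENNReal.ofReal a.toReal + t ^ b.toReal / ENNReal.ofReal b.toReal :=
        young_inequality s t hab
    _ ≤ s ^ a.toReal + t ^ b.toReal := by
        gcongr
        · exact ENNReal.div_le_of_le_mul (le_mul_of_one_le_right' (one_le_ofReal.2 hab.lt.le))
        · exact ENNReal.div_le_of_le_mul
            (le_mul_of_one_le_right' (one_le_ofReal.2 hab.symm.lt.le))
    _ = _ := by simp [ha, hb]

end ENNReal.HolderConjugate

lemma measurable_of_holderConjugate {α : Type*} [MeasurableSpace α] {p q : α → ℝ≥0∞}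
    (hp : Measurable p) (hpq : ∀ x, (p x).HolderConjugate (q x)) : Measurable q := by
  have hq : q = fun x => (1 - (p x)⁻¹)⁻¹ :=
    funext fun x => by rw [HolderConjugate.one_sub_inv (p x) (q x), inv_inv]
  rw [hq]
  fun_prop

section VariableExponent

variable {n : ℕ} {p q u v : Euc n → ℝ≥0∞}

lemma modularE_mono (h : u ≤ v) : modularE p u ≤ modularE p v :=
  add_le_add (lintegral_mono fun x => rpow_le_rpow (h x) toReal_nonneg)
    (essSup_mono_ae (Filter.Eventually.of_forall h))

lemma modularE_div_le_one_of_luxNormE_lt {l : ℝ≥0∞} (h : luxNormE p u < l) :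
    modularE p (fun x => u x / l) ≤ 1 := by
  obtain ⟨l', ⟨-, hl'⟩, hl'l⟩ := sInf_lt_iff.1 h
  exact (modularE_mono fun x => ENNReal.div_le_div_left hl'l.le _).trans hl'

lemma lintegral_indicator_rpow_le_modularE :
    ∫⁻ x, {x | p x ≠ ∞}.indicator (fun x => u x ^ (p x).toReal) x ≤ modularE p u :=
  (lintegral_indicator_le _ _).trans le_self_add

lemma ae_le_one_of_modularE_le_one (hp : Measurable p) (h : modularE p u ≤ 1) :
    ∀ᵐ x, p x = ∞ → u x ≤ 1 := by
  have hess : essSup u (volume.restrict {x | p x = ∞}) ≤ 1 := le_add_self.trans h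
  refine (ae_restrict_iff' (hp (measurableSet_singleton ∞))).1 ?_
  exact (ae_le_essSup u).mono fun x hx => hx.trans hess

lemma lintegral_mul_le_two_of_modularE_le_one (hpq : ∀ x, (p x).HolderConjugate (q x))
    (hp : Measurable p) (hu : Measurable u) (hmu : modularE p u ≤ 1) (hmv : modularE q v ≤ 1) :
    ∫⁻ x, u x * v x ≤ 2 := by
  have hq : Measurable q := measurable_of_holderConjugate hp hpq
  calc ∫⁻ x, u x * v x
      ≤ ∫⁻ x, ({x | p x ≠ ∞}.indicator (fun x => u x ^ (p x).toReal) x +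
          {x | q x ≠ ∞}.indicator (fun x => v x ^ (q x).toReal) x) := by
        refine lintegral_mono_ae ?_
        filter_upwards [ae_le_one_of_modularE_le_one hp hmu,
          ae_le_one_of_modularE_le_one hq hmv] with x hux hvx
        simpa only [Set.indicator_apply, Set.mem_ofPred_eq] using
          HolderConjugate.mul_le_rpow_add_rpow hux hvx
    _ = (∫⁻ x, {x | p x ≠ ∞}.indicator (fun x => u x ^ (p x).toReal) x) +
          ∫⁻ x, {x | q x ≠ ∞}.indicator (fun x => v x ^ (q x).toReal) x :=
        lintegral_add_left ((hu.pow hp.ennreal_toReal).indicator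
          (hp (measurableSet_singleton ∞).compl)) _
    _ ≤ modularE p u + modularE q v :=
        add_le_add lintegral_indicator_rpow_le_modularE lintegral_indicator_rpow_le_modularE
    _ ≤ 2 := (add_le_add hmu hmv).trans_eq one_add_one_eq_two

lemma lintegral_mul_le_two_mul_of_luxNormE_lt (hpq : ∀ x, (p x).HolderConjugate (q x))
    (hp : Measurable p) (hu : Measurable u) {l m : ℝ≥0∞} (hl : luxNormE p u < l)
    (hm : luxNormE q v < m) : ∫⁻ x, u x * v x ≤ 2 * (l * m) := by
  have hl0 : l ≠ 0 := (zero_le.trans_lt hl).ne'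
  have hm0 : m ≠ 0 := (zero_le.trans_lt hm).ne'
  rcases eq_or_ne l ∞ with rfl | hlt
  · simp [hm0]
  rcases eq_or_ne m ∞ with rfl | hmt
  · simp [hl0]
  calc ∫⁻ x, u x * v x = ∫⁻ x, l * m * (u x / l * (v x / m)) := by
        congr 1 with x
        rw [mul_mul_mul_comm, ENNReal.mul_div_cancel hl0 hlt, ENNReal.mul_div_cancel hm0 hmt]
    _ = l * m * ∫⁻ x, u x / l * (v x / m) := lintegral_const_mul' _ _ (mul_ne_top hlt hmt)
    _ ≤ l * m * 2 := by
        gcongr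
        exact lintegral_mul_le_two_of_modularE_le_one hpq hp (hu.div_const l)
          (modularE_div_le_one_of_luxNormE_lt hl) (modularE_div_le_one_of_luxNormE_lt hm)
    _ = 2 * (l * m) := mul_comm _ _

theorem lintegral_mul_le_two_mul_luxNormE_mul (hpq : ∀ x, (p x).HolderConjugate (q x))
    (hp : Measurable p) (hu : Measurable u) (hpu : luxNormE p u ≠ ∞) (hqv : luxNormE q v ≠ ∞) :
    ∫⁻ x, u x * v x ≤ 2 * luxNormE p u * luxNormE q v := by
  rw [mul_assoc, mul_comm, ← ENNReal.div_le_iff_le_mul (Or.inl two_ne_zero) (Or.inl ofNat_ne_top)]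
  refine le_mul_of_forall_lt (Or.inr hqv) (Or.inl hpu) fun l hl m hm => ?_
  rw [ENNReal.div_le_iff_le_mul (Or.inl two_ne_zero) (Or.inl ofNat_ne_top), mul_comm]
  exact lintegral_mul_le_two_mul_of_luxNormE_lt hpq hp hu hl hm

end VariableExponent

theorem stmt8_general {n : ℕ} (p q : Euc n → ℝ≥0∞)
    (hpq : ∀ x, (p x)⁻¹ + (q x)⁻¹ = 1)
    (hpm : Measurable p) (f g : Euc n → ℝ) (hf : Measurable f) (hg : Measurable g)
    (hfL : luxNormE p (fun x => ENNReal.ofReal |f x|) ≠ ∞)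
    (hgL : luxNormE q (fun x => ENNReal.ofReal |g x|) ≠ ∞) :
    Integrable (fun x => f x * g x) ∧
      (∫⁻ x, ENNReal.ofReal |f x * g x|) ≤
        4 * luxNormE p (fun x => ENNReal.ofReal |f x|) *
          luxNormE q (fun x => ENNReal.ofReal |g x|) ∧
      (∀ pm pp : ℝ≥0∞, 1 < pm → pp < ∞ → (∀ x, pm ≤ p x ∧ p x ≤ pp) →
        (∫⁻ x, ENNReal.ofReal |f x * g x|) ≤
          2 * luxNormE p (fun x => ENNReal.ofReal |f x|) *
            luxNormE q (fun x => ENNReal.ofReal |g x|)) := by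
  have hholder : (∫⁻ x, ENNReal.ofReal |f x * g x|) ≤
      2 * luxNormE p (fun x => ENNReal.ofReal |f x|) *
        luxNormE q (fun x => ENNReal.ofReal |g x|) := by
    simp_rw [abs_mul, ENNReal.ofReal_mul (abs_nonneg _)]
    exact lintegral_mul_le_two_mul_luxNormE_mul (fun x => holderConjugate_iff.2 (hpq x)) hpm
      (by fun_prop) hfL hgL
  refine ⟨⟨(hf.mul hg).aestronglyMeasurable, ?_⟩, hholder.trans (by gcongr; norm_num),
    fun _ _ _ _ _ => hholder⟩
  rw [hasFiniteIntegral_iff_norm]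
  simp_rw [Real.norm_eq_abs]
  exact hholder.trans_lt (by finiteness)

/-- Hölder's inequality in variable Lebesgue spaces: for an exponent
function `p(·)` with pointwise conjugate `q(·)` (so `1/p(x) + 1/q(x) = 1`), and all
`f ∈ L^{p(·)}(ℝⁿ)`, `g ∈ L^{q(·)}(ℝⁿ)`, the product `fg` is integrable and
`∫ |fg| ≤ 4 ‖f‖_{L^{p(·)}} ‖g‖_{L^{q(·)}}`; moreover if `1 < pm ≤ p ≤ pp < ∞`, the
constant `4` can be replaced by `2`. -/
theorem stmt8 {n : ℕ} (p q : Euc n → ℝ≥0∞)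
    (hp1 : ∀ x, 1 ≤ p x) (hpq : ∀ x, (p x)⁻¹ + (q x)⁻¹ = 1)
    (hpm : Measurable p) (f g : Euc n → ℝ) (hf : Measurable f) (hg : Measurable g)
    (hfL : luxNormE p (fun x => ENNReal.ofReal |f x|) ≠ ∞)
    (hgL : luxNormE q (fun x => ENNReal.ofReal |g x|) ≠ ∞) :
    Integrable (fun x => f x * g x) ∧
      (∫⁻ x, ENNReal.ofReal |f x * g x|) ≤
        4 * luxNormE p (fun x => ENNReal.ofReal |f x|) *
          luxNormE q (fun x => ENNReal.ofReal |g x|) ∧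
      (∀ pm pp : ℝ≥0∞, 1 < pm → pp < ∞ → (∀ x, pm ≤ p x ∧ p x ≤ pp) →
        (∫⁻ x, ENNReal.ofReal |f x * g x|) ≤
          2 * luxNormE p (fun x => ENNReal.ofReal |f x|) *
            luxNormE q (fun x => ENNReal.ofReal |g x|)) :=
  stmt8_general p q hpq hpm f g hf hg hfL hgL
end
end
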